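/- Let n ≥ 2 and let {H_iα_i}_{i=1}^{s} be a coset partition of the free group F_n, where H_i < F_n has finite index d_i > 1 and α_i ∈ F_n. Let N = ⋂_{i=1}^{s} ⋂_{g ∈ F_n} g⁻¹H_ig, let w ∈ F_n, and let o_{*i}(w) be the least positive integer m with w^m ∈ α_i⁻¹H_iα_i. Fix y ∈ F_n and set Y(y) = {1 ≤ i ≤ s : y w^j ∈ H_iα_i for some integer j}, and suppose o_{*i}(w) > 1 for some i ∈ Y(y). Let o_max = max{o_{*i}(w) : i ∈ Y(y)}. Then: (1) the number of indices i ∈ Y(y) with o_{*i}(w) = o_max is at least p, where p is the smallest prime dividing o_max; (2) for every l ∈ Y(y) there exists k ∈ Y(y), k ≠ l, such that o_{*l}(w) divides o_{*k}(w). -/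

import Mathlib

/-!
The orbit `j ↦ y * w ^ j` meets the coset `H i * α i` exactly in a residue class modulo
`o i`, so the cosets indexed by `Y` induce an exact covering of `ℤ` by residue classes
`r i mod m i` with `m i = o i`. Summing a primitive `M`-th root of unity `μ` over a common
period and splitting the sum along the covering gives `∑_{M ∣ m i} μ ^ r i / m i = 0` for
every `M > 1`. For `M = o l` the sum is a single nonzero term unless `o l` divides another
modulus. For `M = omax` the classes of maximal modulus give a vanishing sum of distinct
`omax`-th roots of unity; its Galois conjugates show that the power sums with exponents
`1, …, minFac omax - 1` vanish as well, and a Vandermonde determinant then forces at least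
`minFac omax` roots.
-/

open Finset Polynomial

namespace IsPrimitiveRoot

variable {K : Type*} [Field K] {ζ : K} {N : ℕ}

theorem zpow_emod_of_dvd (hζ : IsPrimitiveRoot ζ N) {m : ℕ} (hNm : N ∣ m) (r : ℤ) :
    ζ ^ (r % m) = ζ ^ r := by
  obtain rfl | hm := Nat.eq_zero_or_pos m
  · simp
  have hζm : ζ ^ (m : ℤ) = 1 := by rw [zpow_natCast, (hζ.pow_eq_one_iff_dvd m).2 hNm]
  have hζ0 : ζ ≠ 0 := hζ.ne_zero (Nat.pos_of_dvd_of_pos hNm hm).ne'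
  conv_rhs => rw [← Int.emod_add_mul_ediv r m, zpow_add₀ hζ0, zpow_mul, hζm, one_zpow, mul_one]

theorem sum_range_filter_modEq (hζ : IsPrimitiveRoot ζ N) {m L : ℕ} (hNL : N ∣ L)
    (hmL : m ∣ L) (hm : 0 < m) (r : ℤ) :
    ∑ x ∈ range L with ((x : ℕ) : ℤ) ≡ r [ZMOD m], ζ ^ x =
      if N ∣ m then ζ ^ r * ((L / m : ℕ) : K) else 0 := by
  obtain ⟨q, rfl⟩ := hmL
  rw [Nat.mul_div_cancel_left q hm]
  set r₀ := (r % m).toNat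
  have hr₀ : (r₀ : ℤ) = r % m := Int.toNat_of_nonneg (Int.emod_nonneg _ (by omega))
  have hr₀m : r₀ < m := by have := Int.emod_lt_of_pos r (by omega : (0 : ℤ) < m); omega
  have hfilter :
      {x ∈ range (m * q) | ((x : ℕ) : ℤ) ≡ r [ZMOD m]} = (range q).image (r₀ + m * ·) := by
    ext x
    simp only [mem_filter, mem_range, mem_image, Int.ModEq, ← hr₀]
    constructor
    · rintro ⟨hx, hmod⟩
      have hxm : x % m = r₀ := by exact_mod_cast hmod
      refine ⟨x / m, (Nat.div_lt_iff_lt_mul hm).2 (by linarith), ?_⟩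
      rw [← hxm, Nat.mod_add_div]
    · rintro ⟨t, ht, rfl⟩
      refine ⟨by nlinarith, ?_⟩
      push_cast
      rw [Int.add_mul_emod_self_left, Int.emod_eq_of_lt (by omega) (by omega)]
  rw [hfilter, sum_image fun a _ b _ h => Nat.eq_of_mul_eq_mul_left hm (by simpa using h)]
  simp_rw [pow_add, pow_mul, ← mul_sum]
  split_ifs with hNm
  · rw [(hζ.pow_eq_one_iff_dvd m).2 hNm]
    simp [← zpow_natCast, hr₀, hζ.zpow_emod_of_dvd hNm]
  · have hne : ζ ^ m ≠ 1 := fun h => hNm ((hζ.pow_eq_one_iff_dvd m).1 h)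
    rw [geom_sum_eq hne, ← pow_mul, (hζ.pow_eq_one_iff_dvd _).2 hNL, sub_self, zero_div, mul_zero]

variable [CharZero K] [NeZero N]

theorem sum_pow_eq_zero_of_coprime (hζ : IsPrimitiveRoot ζ N)
    {S : Finset K} (hS : ∀ x ∈ S, x ^ N = 1) (hsum : ∑ x ∈ S, x = 0) {u : ℕ}
    (hu : u.Coprime N) : ∑ x ∈ S, x ^ u = 0 := by
  choose! b hb using fun x hx => (hζ.eq_pow_of_pow_eq_one (hS x hx)).imp fun _ h => h.2
  let P : ℤ[X] := ∑ x ∈ S, X ^ b x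
  have hP : ∀ z : K, aeval z P = ∑ x ∈ S, z ^ b x := by simp [P]
  have hdvd : minpoly ℤ ζ ∣ P := by
    refine minpoly.isIntegrallyClosed_dvd (hζ.isIntegral (NeZero.pos N)) ?_
    rw [hP, ← hsum]
    exact sum_congr rfl hb
  have hroot := aeval_eq_zero_of_dvd_aeval_eq_zero (hζ.minpoly_eq_pow_coprime hu ▸ hdvd)
    (minpoly.aeval ℤ (ζ ^ u))
  rw [hP] at hroot
  refine (sum_congr rfl fun x hx => ?_).trans hroot
  rw [pow_right_comm, hb x hx]

theorem minFac_le_card_of_sum_eq_zero (hζ : IsPrimitiveRoot ζ N)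
    {S : Finset K} (hS : ∀ x ∈ S, x ^ N = 1) (hne : S.Nonempty) (hsum : ∑ x ∈ S, x = 0) :
    N.minFac ≤ #S := by
  by_contra! hlt
  let x : Fin #S → K := fun j => S.equivFin.symm j
  have hx : Function.Injective x := Subtype.val_injective.comp S.equivFin.symm.injective
  have hsum_fin : ∀ f : K → K, ∑ j, f (x j) = ∑ y ∈ S, f y := fun f =>
    (Equiv.sum_comp S.equivFin.symm (fun y => f y)).trans (sum_coe_sort S f)
  have hzero : x = 0 := by
    refine Matrix.eq_zero_of_forall_pow_sum_mul_pow_eq_zero hx fun i => ?_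
    have hu : (i + 1 : ℕ).Coprime N :=
      (Nat.coprime_of_lt_minFac i.val.succ_ne_zero (by omega)).symm
    simp_rw [← pow_succ']
    exact (hsum_fin (· ^ ((i : ℕ) + 1))).trans (hζ.sum_pow_eq_zero_of_coprime hS hsum hu)
  have h0 : x ⟨0, hne.card_pos⟩ ∈ S := (S.equivFin.symm _).2
  rw [hzero] at h0
  simpa [NeZero.ne N] using hS 0 h0

end IsPrimitiveRoot

def IsExactCover {ι : Type*} (m : ι → ℕ) (r : ι → ℤ) : Prop :=
  ∀ x : ℤ, ∃! i, x ≡ r i [ZMOD m i]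

namespace IsExactCover

variable {ι : Type*} {m : ι → ℕ} {r : ι → ℤ}

theorem eq_of_modEq (h : IsExactCover m r) {i j : ι} (hij : m i = m j)
    (hr : r i ≡ r j [ZMOD m i]) : i = j :=
  (h (r i)).unique (Int.ModEq.refl _) (hij ▸ hr)

variable [Fintype ι]

theorem sum_zpow_div_eq_zero {K : Type*} [Field K] [CharZero K] (h : IsExactCover m r)
    (hm : ∀ i, 0 < m i) {μ : K} {M : ℕ} (hμ : IsPrimitiveRoot μ M) (hM : 1 < M) :
    ∑ i with M ∣ m i, μ ^ r i / m i = 0 := by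
  classical
  set L := M * ∏ i, m i
  have hML : M ∣ L := dvd_mul_right _ _
  have hmL : ∀ i, m i ∣ L := fun i => (dvd_prod_of_mem m (mem_univ i)).mul_left M
  have hL : (L : K) ≠ 0 :=
    Nat.cast_ne_zero.2 (Nat.mul_pos (by omega) (prod_pos fun i _ => hm i)).ne'
  choose c hc hc_unique using h
  have hfibre : ∀ i, ∑ x ∈ range L with c ((x : ℕ) : ℤ) = i, μ ^ x =
      if M ∣ m i then μ ^ r i * ((L / m i : ℕ) : K) else 0 := fun i => by
    rw [← hμ.sum_range_filter_modEq hML (hmL i) (hm i)]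
    refine sum_congr (filter_congr fun x _ => ?_) fun _ _ => rfl
    exact ⟨fun hx => hx ▸ hc x, fun hx => (hc_unique x i hx).symm⟩
  have hgeom : ∑ x ∈ range L, μ ^ x = 0 := by
    rw [geom_sum_eq (hμ.ne_one hM), (hμ.pow_eq_one_iff_dvd L).2 hML, sub_self, zero_div]
  rw [← sum_fiberwise_of_maps_to (t := univ) (g := fun x : ℕ => c x) (fun _ _ => mem_univ _),
    sum_congr rfl fun i _ => hfibre i, sum_ite, sum_const_zero, add_zero] at hgeom
  refine (mul_eq_zero.1 (?_ : (L : K) * _ = 0)).resolve_left hL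
  rw [mul_sum, ← hgeom]
  refine sum_congr rfl fun i _ => ?_
  rw [Nat.cast_div (hmL i) (Nat.cast_ne_zero.2 (hm i).ne')]
  field_simp

theorem minFac_le_card (h : IsExactCover m r) (hm : ∀ i, 0 < m i) {N : ℕ}
    (hN : ∃ i, m i = N) (hmax : ∀ i, m i ≤ N) : N.minFac ≤ #{i | m i = N} := by
  obtain ⟨i₀, rfl⟩ := hN
  have hne : ({i | m i = m i₀} : Finset ι).Nonempty := ⟨i₀, by simp⟩
  obtain h1 | hN := (Nat.one_le_iff_ne_zero.2 (hm i₀).ne').eq_or_lt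
  · calc (m i₀).minFac = 1 := by rw [← h1, Nat.minFac_one]
      _ ≤ _ := hne.card_pos
  set N := m i₀
  have : NeZero N := ⟨(hm i₀).ne'⟩
  let ζ : ℂ := Complex.exp (2 * Real.pi * Complex.I / N)
  have hζ : IsPrimitiveRoot ζ N := Complex.isPrimitiveRoot_exp N (NeZero.ne N)
  have hdvd_iff : ∀ i, N ∣ m i ↔ m i = N := fun i =>
    ⟨fun hd => le_antisymm (hmax i) (Nat.le_of_dvd (hm i) hd), fun he => he ▸ dvd_rfl⟩
  have hsum : ∑ i with m i = N, ζ ^ r i = 0 := by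
    have hdiv := h.sum_zpow_div_eq_zero hm hζ hN
    simp_rw [hdvd_iff] at hdiv
    calc ∑ i with m i = N, ζ ^ r i = N * ∑ i with m i = N, ζ ^ r i / m i := by
          rw [mul_sum]
          refine sum_congr rfl fun i hi => ?_
          rw [(mem_filter.1 hi).2]
          field_simp [NeZero.ne N]
      _ = 0 := by rw [hdiv, mul_zero]
  have hinj : Set.InjOn (fun i => ζ ^ r i) ({i | m i = N} : Finset ι) := by
    intro i hi j hj (hij : ζ ^ r i = ζ ^ r j)
    simp only [coe_filter, mem_univ, true_and, Set.mem_ofPred_eq] at hi hj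
    refine h.eq_of_modEq (hi.trans hj.symm) (Int.modEq_iff_dvd.2 ?_)
    have hζ0 : ζ ≠ 0 := hζ.ne_zero (NeZero.ne N)
    rw [hi, ← hζ.zpow_eq_one_iff_dvd, zpow_sub₀ hζ0, ← hij, div_self (zpow_ne_zero _ hζ0)]
  rw [← card_image_of_injOn hinj]
  refine hζ.minFac_le_card_of_sum_eq_zero ?_ (hne.image _) (by rwa [sum_image hinj])
  simp only [mem_image]
  rintro _ ⟨i, -, rfl⟩
  rw [← zpow_natCast, ← zpow_mul, mul_comm, zpow_mul, zpow_natCast, hζ.pow_eq_one, one_zpow]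

theorem exists_ne_dvd (h : IsExactCover m r) (hm : ∀ i, 0 < m i) (l : ι) (hl : 1 < m l) :
    ∃ k ≠ l, m l ∣ m k := by
  by_contra! hcon
  let μ : ℂ := Complex.exp (2 * Real.pi * Complex.I / m l)
  have hμ : IsPrimitiveRoot μ (m l) := Complex.isPrimitiveRoot_exp _ (hm l).ne'
  have hsingle : ({i | m l ∣ m i} : Finset ι) = {l} := by
    ext i
    simp only [mem_filter, mem_univ, true_and, mem_singleton]
    exact ⟨fun hi => by_contra fun hil => hcon i hil hi, fun hi => hi ▸ dvd_rfl⟩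
  have := h.sum_zpow_div_eq_zero hm hμ hl
  rw [hsingle, sum_singleton] at this
  exact div_ne_zero (zpow_ne_zero _ (hμ.ne_zero (hm l).ne')) (Nat.cast_ne_zero.2 (hm l).ne') this

end IsExactCover

section CosetPartition

variable {G : Type*} [Group G]

theorem zpow_mem_iff_dvd_of_isLeast {H : Subgroup G} {g : G} {o : ℕ}
    (ho : IsLeast {m : ℕ | 0 < m ∧ g ^ m ∈ H} o) (z : ℤ) : g ^ z ∈ H ↔ (o : ℤ) ∣ z := by
  have hgo : g ^ (o : ℤ) ∈ H := by simpa using ho.1.2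
  have hpos : (0 : ℤ) < o := by exact_mod_cast ho.1.1
  have hmod : g ^ z ∈ H ↔ g ^ (z % o) ∈ H := by
    conv_lhs => rw [← Int.emod_add_mul_ediv z o, zpow_add, zpow_mul]
    exact H.mul_mem_cancel_right (zpow_mem hgo _)
  rw [hmod, Int.dvd_iff_emod_eq_zero]
  refine ⟨fun hmem => by_contra fun hne => ?_, fun h0 => by rw [h0, zpow_zero]; exact H.one_mem⟩
  have hnonneg := Int.emod_nonneg z hpos.ne'
  have hle : o ≤ (z % o).toNat :=
    ho.2 ⟨by omega, by rwa [← zpow_natCast, Int.toNat_of_nonneg hnonneg]⟩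
  have := Int.emod_lt_of_pos z hpos
  omega

theorem mul_zpow_mul_inv_mem_iff_modEq {H : Subgroup G} {a w y : G} {o : ℕ}
    (ho : IsLeast {m : ℕ | 0 < m ∧ a * w ^ m * a⁻¹ ∈ H} o) {x : ℤ} (hx : y * w ^ x * a⁻¹ ∈ H)
    (x' : ℤ) : y * w ^ x' * a⁻¹ ∈ H ↔ x' ≡ x [ZMOD o] := by
  have hshift : y * w ^ x' * a⁻¹ = y * w ^ x * a⁻¹ * (a * w * a⁻¹) ^ (x' - x) := by
    rw [conj_zpow, zpow_sub]
    group
  rw [hshift, H.mul_mem_cancel_left hx, Int.modEq_comm, Int.modEq_iff_dvd]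
  exact zpow_mem_iff_dvd_of_isLeast (by simpa only [conj_pow] using ho) _

theorem isExactCover_of_coset_partition {ι : Type*} {H : ι → Subgroup G} {α : ι → G}
    (hpart : ∀ x : G, ∃! i, x * (α i)⁻¹ ∈ H i) {w : G} {o : ι → ℕ}
    (ho : ∀ i, IsLeast {m : ℕ | 0 < m ∧ α i * w ^ m * (α i)⁻¹ ∈ H i} (o i)) (y : G) :
    IsExactCover (fun i : {i // ∃ j : ℤ, y * w ^ j * (α i)⁻¹ ∈ H i} => o i)
      (fun i => i.2.choose) := by
  intro x
  obtain ⟨i, hi, huniq⟩ := hpart (y * w ^ x)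
  let i' : {i // ∃ j : ℤ, y * w ^ j * (α i)⁻¹ ∈ H i} := ⟨i, x, hi⟩
  refine ⟨i', (mul_zpow_mul_inv_mem_iff_modEq (ho i) i'.2.choose_spec x).1 hi,
    fun k hk => Subtype.ext (huniq k ?_)⟩
  exact (mul_zpow_mul_inv_mem_iff_modEq (ho k) k.2.choose_spec x).2 hk

end CosetPartition

theorem loop_erdos_properties_general
    (n s : ℕ)
    (H : Fin s → Subgroup (FreeGroup (Fin n)))
    (α : Fin s → FreeGroup (Fin n))
    (hpart : ∀ x : FreeGroup (Fin n), ∃! i : Fin s, x * (α i)⁻¹ ∈ H i)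
    (w : FreeGroup (Fin n)) (o : Fin s → ℕ)
    (ho : ∀ i, IsLeast {m : ℕ | 0 < m ∧ α i * w ^ m * (α i)⁻¹ ∈ H i} (o i))
    (y : FreeGroup (Fin n))
    (Y : Set (Fin s))
    (hY : Y = {i : Fin s | ∃ j : ℤ, y * w ^ j * (α i)⁻¹ ∈ H i})
    (hnontriv : ∃ i ∈ Y, 1 < o i)
    (omax : ℕ)
    (homax_mem : ∃ i ∈ Y, o i = omax)
    (homax_ub : ∀ i ∈ Y, o i ≤ omax) :
    omax.minFac ≤ Set.ncard {i : Fin s | i ∈ Y ∧ o i = omax} ∧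
    ∀ l ∈ Y, ∃ k ∈ Y, k ≠ l ∧ o l ∣ o k := by
  classical
  subst hY
  have hcover := isExactCover_of_coset_partition hpart ho y
  have hpos : ∀ i, 0 < o i := fun i => (ho i).1.1
  refine ⟨?_, fun l hl => ?_⟩
  · obtain ⟨i, hi, rfl⟩ := homax_mem
    have := hcover.minFac_le_card (fun i => hpos i) ⟨⟨i, hi⟩, rfl⟩ fun k => homax_ub k k.2
    convert this using 1
    rw [← Nat.card_coe_set_eq, ← Fintype.card_subtype, ← Nat.card_eq_fintype_card]
    exact Nat.card_congr (Equiv.subtypeSubtypeEquivSubtypeInter _ _).symm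
  · obtain ⟨i₀, hi₀, h1⟩ := hnontriv
    by_cases hl1 : o l = 1
    · exact ⟨i₀, hi₀, by rintro rfl; omega, hl1 ▸ one_dvd _⟩
    obtain ⟨k, hk, hdvd⟩ :=
      hcover.exists_ne_dvd (fun i => hpos i) ⟨l, hl⟩ (lt_of_le_of_ne (hpos l) (Ne.symm hl1))
    exact ⟨k, k.2, fun e => hk (Subtype.ext e), hdvd⟩

/-- Fix a coset partition `{H i • α i}` of `F n`, `w ∈ F n` with orders
`o i = o_{*i}(w)`, and `y ∈ F n`. Let `Y` be the set of indices whose coset meets the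
`w`-orbit of `y`, and suppose `o i > 1` for some `i ∈ Y`. Let `omax` be the maximum of
`o i` over `Y`. Then (1) at least `minFac omax` indices `i ∈ Y` satisfy `o i = omax`, and
(2) for every `l ∈ Y` there is `k ∈ Y`, `k ≠ l`, with `o l ∣ o k`. -/
theorem loop_erdos_properties
    (n s : ℕ) (hn : 2 ≤ n)
    (H : Fin s → Subgroup (FreeGroup (Fin n)))
    (α : Fin s → FreeGroup (Fin n))
    (d : Fin s → ℕ)
    (hind : ∀ i, (H i).index = d i)
    (hone : ∀ i, 1 < d i)
    (hpart : ∀ x : FreeGroup (Fin n), ∃! i : Fin s, x * (α i)⁻¹ ∈ H i)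
    (w : FreeGroup (Fin n)) (o : Fin s → ℕ)
    (ho : ∀ i, IsLeast {m : ℕ | 0 < m ∧ α i * w ^ m * (α i)⁻¹ ∈ H i} (o i))
    (y : FreeGroup (Fin n))
    (Y : Set (Fin s))
    (hY : Y = {i : Fin s | ∃ j : ℤ, y * w ^ j * (α i)⁻¹ ∈ H i})
    (hnontriv : ∃ i ∈ Y, 1 < o i)
    (omax : ℕ)
    (homax_mem : ∃ i ∈ Y, o i = omax)
    (homax_ub : ∀ i ∈ Y, o i ≤ omax) :
    omax.minFac ≤ Set.ncard {i : Fin s | i ∈ Y ∧ o i = omax} ∧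
    ∀ l ∈ Y, ∃ k ∈ Y, k ≠ l ∧ o l ∣ o k :=
  loop_erdos_properties_general n s H α hpart w o ho y Y hY hnontriv omax homax_mem homax_ub
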